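/- Let (X,d) be a uniquely geodesic metric space, A ⊆ X nonempty and convex, and γ:[0,∞)→A a directional curve with constant b > 0. Set D = b and M_n = γ((n+2)D + 1) for all n ∈ ℕ. Then d(M_n,M_{n+1}) ≤ D for all n, and in every play of the Lion-Man game with speed D, starting point L₀ = γ(0), and man's positions (M_n), one has d(L_n,M_n) ≥ D + 1 for all n ∈ ℕ; in particular the man wins this play. -/
import Mathlib


open Set Filter Metric

section Defs

variable {X : Type*} [MetricSpace X]

/-- A unit-speed geodesic defined on `[a, b]`. -/
def IsGeodesicOn (γ : ℝ → X) (a b : ℝ) : Prop :=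
  ∀ s ∈ Set.Icc a b, ∀ t ∈ Set.Icc a b, dist (γ s) (γ t) = |s - t|

/-- `S` is a geodesic segment joining `x` and `y`. -/
def IsGeodesicSegment (S : Set X) (x y : X) : Prop :=
  ∃ (a b : ℝ) (γ : ℝ → X), a ≤ b ∧ IsGeodesicOn γ a b ∧ γ a = x ∧ γ b = y ∧
    S = γ '' Set.Icc a b

/-- A geodesic space: every two points are joined by a geodesic segment. -/
def GeodesicSpace (X : Type*) [MetricSpace X] : Prop :=
  ∀ x y : X, ∃ S : Set X, IsGeodesicSegment S x y

/-- A uniquely geodesic space. -/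
def UniquelyGeodesic (X : Type*) [MetricSpace X] : Prop :=
  ∀ x y : X, ∃! S : Set X, IsGeodesicSegment S x y

/-- `S` is contained in the closed `M`-neighborhood of `T`. -/
def InClosedNbhd (S T : Set X) (M : ℝ) : Prop :=
  ∀ p ∈ S, ∃ q ∈ T, dist p q ≤ M

/-- A triangle with sides `S1, S2, S3` is `M`-slim. -/
def SlimTriangle (S1 S2 S3 : Set X) (M : ℝ) : Prop :=
  InClosedNbhd S1 (S2 ∪ S3) M ∧ InClosedNbhd S2 (S1 ∪ S3) M ∧ InClosedNbhd S3 (S1 ∪ S2) M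

/-- `X` is `δ`-hyperbolic: every geodesic triangle is `δ`-slim. -/
def DeltaHyperbolic (X : Type*) [MetricSpace X] (δ : ℝ) : Prop :=
  ∀ x y z : X, ∀ S1 S2 S3 : Set X,
    IsGeodesicSegment S1 x y → IsGeodesicSegment S2 y z → IsGeodesicSegment S3 z x →
    SlimTriangle S1 S2 S3 δ

/-- A geodesic ray `γ : [0, ∞) → X`. -/
def IsGeodesicRay (γ : ℝ → X) : Prop :=
  ∀ s ∈ Set.Ici (0:ℝ), ∀ t ∈ Set.Ici (0:ℝ), dist (γ s) (γ t) = |s - t|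

/-- A set is geodesically bounded if it contains no geodesic ray. -/
def GeodesicallyBounded (A : Set X) : Prop :=
  ¬ ∃ γ : ℝ → X, IsGeodesicRay γ ∧ ∀ t ∈ Set.Ici (0:ℝ), γ t ∈ A

/-- A directional curve `γ : [0, ∞) → X` (with some constant `b ≥ 0`). -/
def IsDirectionalCurve (γ : ℝ → X) : Prop :=
  ∃ b : ℝ, 0 ≤ b ∧ ∀ s ∈ Set.Ici (0:ℝ), ∀ t ∈ Set.Ici (0:ℝ),
    |s - t| - b ≤ dist (γ s) (γ t) ∧ dist (γ s) (γ t) ≤ |s - t|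

/-- A set is directionally bounded if it contains no directional curve. -/
def DirectionallyBounded (A : Set X) : Prop :=
  ¬ ∃ γ : ℝ → X, IsDirectionalCurve γ ∧ ∀ t ∈ Set.Ici (0:ℝ), γ t ∈ A

/-- A subset of a geodesic space is convex if every geodesic segment joining two of its
points is contained in it. -/
def GeodesicConvex (A : Set X) : Prop :=
  ∀ x ∈ A, ∀ y ∈ A, ∀ S : Set X, IsGeodesicSegment S x y → S ⊆ A

/-- The comparison point in the Euclidean plane: the point on the segment from `x'` to `y'`
(of length `L`) at distance `t` from `x'`. -/
noncomputable def cmpPt (x' y' : EuclideanSpace ℝ (Fin 2)) (L t : ℝ) :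
    EuclideanSpace ℝ (Fin 2) :=
  AffineMap.lineMap x' y' (t / L)

/-- `X` is a CAT(0) space: it is geodesic and for every geodesic triangle and every
comparison triangle in the Euclidean plane, distances between points on the triangle are
bounded by the distances between the corresponding comparison points. -/
def CAT0Space (X : Type*) [MetricSpace X] : Prop :=
  GeodesicSpace X ∧
  ∀ (x y z : X) (γ1 γ2 γ3 : ℝ → X),
    IsGeodesicOn γ1 0 (dist x y) → γ1 0 = x → γ1 (dist x y) = y →
    IsGeodesicOn γ2 0 (dist y z) → γ2 0 = y → γ2 (dist y z) = z →
    IsGeodesicOn γ3 0 (dist z x) → γ3 0 = z → γ3 (dist z x) = x →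
    ∀ x' y' z' : EuclideanSpace ℝ (Fin 2),
      dist x' y' = dist x y → dist y' z' = dist y z → dist z' x' = dist z x →
      (∀ s ∈ Set.Icc (0:ℝ) (dist x y), ∀ t ∈ Set.Icc (0:ℝ) (dist y z),
        dist (γ1 s) (γ2 t) ≤ dist (cmpPt x' y' (dist x y) s) (cmpPt y' z' (dist y z) t)) ∧
      (∀ s ∈ Set.Icc (0:ℝ) (dist y z), ∀ t ∈ Set.Icc (0:ℝ) (dist z x),
        dist (γ2 s) (γ3 t) ≤ dist (cmpPt y' z' (dist y z) s) (cmpPt z' x' (dist z x) t)) ∧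
      (∀ s ∈ Set.Icc (0:ℝ) (dist z x), ∀ t ∈ Set.Icc (0:ℝ) (dist x y),
        dist (γ3 s) (γ1 t) ≤ dist (cmpPt z' x' (dist z x) s) (cmpPt x' y' (dist x y) t))

/-- Busemann convexity. -/
def BusemannConvex (X : Type*) [MetricSpace X] : Prop :=
  GeodesicSpace X ∧
  ∀ (a b c d : ℝ) (γ σ : ℝ → X), a ≤ b → c ≤ d →
    IsGeodesicOn γ a b → IsGeodesicOn σ c d →
    ∀ t ∈ Set.Icc (0:ℝ) 1,
      dist (γ ((1-t)*a + t*b)) (σ ((1-t)*c + t*d)) ≤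
        (1-t) * dist (γ a) (σ c) + t * dist (γ b) (σ d)

/-- A `(lam, eps)`-quasi-geodesic defined on `[a, b]`. -/
def IsQuasiGeodesicOn (lam eps : ℝ) (γ : ℝ → X) (a b : ℝ) : Prop :=
  ∀ s ∈ Set.Icc a b, ∀ t ∈ Set.Icc a b,
    (1/lam) * |s - t| - eps ≤ dist (γ s) (γ t) ∧ dist (γ s) (γ t) ≤ lam * |s - t| + eps

/-- A `(lam, eps)`-quasi-geodesic ray. -/
def IsQuasiGeodesicRay (lam eps : ℝ) (γ : ℝ → X) : Prop :=
  ∀ s ∈ Set.Ici (0:ℝ), ∀ t ∈ Set.Ici (0:ℝ),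
    (1/lam) * |s - t| - eps ≤ dist (γ s) (γ t) ∧ dist (γ s) (γ t) ≤ lam * |s - t| + eps

/-- A `k`-local `lam`-quasi-geodesic ray: a `(lam, eps)`-quasi-geodesic ray locally,
for every `eps > 0`. -/
def IsLocalQuasiGeodesicRay (k lam : ℝ) (γ : ℝ → X) : Prop :=
  ∀ eps > (0:ℝ), ∀ s ∈ Set.Ici (0:ℝ), ∀ t ∈ Set.Ici (0:ℝ), |s - t| ≤ k →
    (1/lam) * |s - t| - eps ≤ dist (γ s) (γ t) ∧ dist (γ s) (γ t) ≤ lam * |s - t| + eps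

/-- `S` is the image of a `lam`-quasi-geodesic joining `x` and `y`
(i.e. a `(lam, eps)`-quasi-geodesic for every `eps > 0`). -/
def IsQuasiGeodesicSegment (lam : ℝ) (S : Set X) (x y : X) : Prop :=
  ∃ (a b : ℝ) (γ : ℝ → X), a ≤ b ∧ (∀ eps > (0:ℝ), IsQuasiGeodesicOn lam eps γ a b) ∧
    γ a = x ∧ γ b = y ∧ S = γ '' Set.Icc a b

/-- Every `lam`-quasi-geodesic triangle in `X` is `M`-slim. -/
def QuasiGeodesicTrianglesSlim (X : Type*) [MetricSpace X] (lam M : ℝ) : Prop :=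
  ∀ x y z : X, ∀ S1 S2 S3 : Set X,
    IsQuasiGeodesicSegment lam S1 x y → IsQuasiGeodesicSegment lam S2 y z →
    IsQuasiGeodesicSegment lam S3 z x → SlimTriangle S1 S2 S3 M

/-- A play of the Lion-Man game in `A` with speed `D`. -/
def IsLionManPlay (A : Set X) (D : ℝ) (L M : ℕ → X) : Prop :=
  (∀ n, L n ∈ A) ∧ (∀ n, M n ∈ A) ∧
  (∀ n, ∃ S : Set X, IsGeodesicSegment S (L n) (M n) ∧ L (n+1) ∈ S) ∧
  (∀ n, dist (L n) (L (n+1)) = min D (dist (L n) (M n))) ∧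
  (∀ n, dist (M n) (M (n+1)) ≤ D)

/-- The lion wins a play if `d(L_{n+1}, M_n) → 0`. -/
def LionWins (L M : ℕ → X) : Prop :=
  Filter.Tendsto (fun n => dist (L (n+1)) (M n)) Filter.atTop (nhds 0)

/-- The lion always wins the Lion-Man game played in `A`. -/
def LionAlwaysWins (A : Set X) : Prop :=
  ∀ D > (0:ℝ), ∀ L M : ℕ → X, IsLionManPlay A D L M → LionWins L M

end Defs

/-- Given a directional curve `γ` in `A` with constant `b > 0`, taking `D = b`,
`M_n = γ((n+2)D + 1)` and `L₀ = γ(0)`, the man's moves are legal and in every play with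
these data `d(L_n, M_n) ≥ D + 1` for all `n`; in particular the man wins such a play. -/
theorem stmt10 {X : Type*} [MetricSpace X] (hX : UniquelyGeodesic X)
    (A : Set X) (hA : A.Nonempty) (hconv : GeodesicConvex A)
    (γ : ℝ → X) (b : ℝ) (hb : 0 < b) (hγA : ∀ t ∈ Set.Ici (0:ℝ), γ t ∈ A)
    (hdir : ∀ s ∈ Set.Ici (0:ℝ), ∀ t ∈ Set.Ici (0:ℝ),
      |s - t| - b ≤ dist (γ s) (γ t) ∧ dist (γ s) (γ t) ≤ |s - t|)
    (D : ℝ) (hD : D = b) (M : ℕ → X) (hM : ∀ n : ℕ, M n = γ (((n : ℝ) + 2) * D + 1)) :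
    (∀ n, dist (M n) (M (n + 1)) ≤ D) ∧
    ∀ L : ℕ → X, L 0 = γ 0 →
      (∀ n, ∃ S : Set X, IsGeodesicSegment S (L n) (M n) ∧ L (n + 1) ∈ S) →
      (∀ n, dist (L n) (L (n + 1)) = min D (dist (L n) (M n))) →
      (∀ n, dist (L n) (M n) ≥ D + 1) ∧ ¬ LionWins L M := by
  subst hD
  constructor
  · intro n
    have h1 : ((n:ℝ) + 2) * D + 1 ∈ Set.Ici (0:ℝ) := by
      simp only [Set.mem_Ici]; positivity
    have h2 : (((n:ℝ) + 1) + 2) * D + 1 ∈ Set.Ici (0:ℝ) := by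
      simp only [Set.mem_Ici]; positivity
    have := (hdir _ h1 _ h2).2
    have habs : |(((n:ℝ)) + 2) * D + 1 - ((((n:ℝ) + 1) + 2) * D + 1)| = D := by
      rw [abs_of_nonpos (by nlinarith)]; ring
    rw [hM n, hM (n+1)]
    push_cast
    rw [habs] at this
    convert this using 3 <;> push_cast <;> ring
  · intro L hL0 hS hstep
    have hstepb : ∀ n, dist (L n) (L (n+1)) ≤ D := by
      intro n; rw [hstep n]; exact min_le_left _ _
    have hLn : ∀ n : ℕ, dist (γ 0) (L n) ≤ n * D := by
      intro n
      induction n with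
      | zero => simp [hL0]
      | succ k ih =>
        calc dist (γ 0) (L (k+1)) ≤ dist (γ 0) (L k) + dist (L k) (L (k+1)) :=
              dist_triangle _ _ _
          _ ≤ k * D + D := add_le_add ih (hstepb k)
          _ = (k+1 : ℕ) * D := by push_cast; ring
    have hMn : ∀ n : ℕ, ((n:ℝ) + 1) * D + 1 ≤ dist (γ 0) (M n) := by
      intro n
      have h1 : ((n:ℝ) + 2) * D + 1 ∈ Set.Ici (0:ℝ) := by
        simp only [Set.mem_Ici]; positivity
      have := (hdir 0 Set.self_mem_Ici _ h1).1
      have habs : |(0:ℝ) - (((n:ℝ) + 2) * D + 1)| = ((n:ℝ) + 2) * D + 1 := by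
        rw [abs_of_nonpos (by nlinarith)]; ring
      rw [habs] at this
      rw [hM n]
      linarith
    have key : ∀ n, dist (L n) (M n) ≥ D + 1 := by
      intro n
      have h1 := hLn n
      have h2 := hMn n
      have h3 := dist_triangle (γ 0) (L n) (M n)
      linarith
    refine ⟨key, ?_⟩
    intro hwin
    have hge : ∀ n, (1:ℝ) ≤ dist (L (n+1)) (M n) := by
      intro n
      have h1 := key n
      have h2 := hstepb n
      have h3 := dist_triangle (L n) (L (n+1)) (M n)
      linarith
    have := hwin.eventually_lt_const one_pos
    obtain ⟨n, hn⟩ := this.exists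
    linarith [hge n]
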